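/- Suppose the ultragraph 𝒢 satisfies Condition (RFUM2) and let α be a finite (possibly empty) path on 𝒢. Then the map sending {v} (for v ∈ r(α)) to the principal ultrafilter {C ∈ ℬ(α) : v ∈ C}, and sending B (for B ∈ A_s ∪ A_∞ with B ⊆ r(α) and B infinite) to the ultrafilter {C ∈ ℬ(α) : there exists a finite A ∈ ℬ(α) with B ∖ A ⊆ C}, is a bijection from the set {{v} : v ∈ r(α)} ∪ {B ∈ A_s ∪ A_∞ : B ⊆ r(α), B infinite} onto the set of all ultrafilters in ℬ(α). -/

import Mathlib

/-- An ultragraph: countable sets of vertices and edges, a source map `src : E → V`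
and a range map `rng : E → P(V) \ {∅}`. -/
structure Ultragraph (V : Type*) (E : Type*) where
  src : E → V
  rng : E → Set V
  rng_nonempty : ∀ e, (rng e).Nonempty

namespace Ultragraph

variable {V : Type*} {E : Type*}

/-- `𝒢⁰`: the smallest family of subsets of `V` containing `∅`, all singletons, all
ranges of edges, and closed under finite unions and finite intersections. -/
inductive GZero (G : Ultragraph V E) : Set V → Prop
  | empty : GZero G ∅
  | singleton (v : V) : GZero G {v}
  | range (e : E) : GZero G (G.rng e)
  | union {A B : Set V} : GZero G A → GZero G B → GZero G (A ∪ B)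
  | inter {A B : Set V} : GZero G A → GZero G B → GZero G (A ∩ B)

/-- The accommodating family `ℬ`: the smallest family of subsets of `V` containing `𝒢⁰`
and closed under finite unions, finite intersections and relative complements. -/
inductive AccFam (G : Ultragraph V E) : Set V → Prop
  | base {A : Set V} : G.GZero A → AccFam G A
  | union {A B : Set V} : AccFam G A → AccFam G B → AccFam G (A ∪ B)
  | inter {A B : Set V} : AccFam G A → AccFam G B → AccFam G (A ∩ B)
  | diff {A B : Set V} : AccFam G A → AccFam G B → AccFam G (A \ B)

/-- A finite path: a list of edges with `src (α (i+1)) ∈ rng (α i)`. -/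
def IsPath (G : Ultragraph V E) (α : List E) : Prop :=
  α.Chain' fun e f => G.src f ∈ G.rng e

/-- The range of a finite path: the range of its last edge; for the empty path it is
the whole vertex set. -/
def pathRange (G : Ultragraph V E) (α : List E) : Set V :=
  α.getLast?.elim Set.univ G.rng

/-- `ℬ(α) = {A ∈ ℬ : A ⊆ r(α)}`. -/
def bAt (G : Ultragraph V E) (α : List E) : Set (Set V) :=
  {A | G.AccFam A ∧ A ⊆ G.pathRange α}

/-- The relative range `r(A, α)`, defined by `r(A, ε) = A`, `r(A, e) = r(e)` if
`s(e) ∈ A` and `∅` otherwise, and `r(A, αe) = r(r(A, α), e)`. -/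
def relRange (G : Ultragraph V E) (A : Set V) (α : List E) : Set V :=
  α.foldl (fun B e => {v | G.src e ∈ B ∧ v ∈ G.rng e}) A

/-- `ε(A) = {e : s(e) ∈ A}`. -/
def eps (G : Ultragraph V E) (A : Set V) : Set E := {e | G.src e ∈ A}

/-- The set of sinks: vertices emitting no edge. -/
def sinks (G : Ultragraph V E) : Set V := {v | ∀ e, G.src e ≠ v}

/-- A minimal infinite emitter. -/
def MinInfEmitter (G : Ultragraph V E) (A : Set V) : Prop :=
  G.GZero A ∧ (G.eps A).Infinite ∧
    (∀ B, G.GZero B → B ⊂ A → ¬(G.eps B).Infinite) ∧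
    (∀ B, G.GZero B → B ⊂ A → ¬((G.eps B).Finite ∧ B.Infinite))

/-- A minimal sink. -/
def MinSink (G : Ultragraph V E) (A : Set V) : Prop :=
  G.GZero A ∧ A.Infinite ∧ (G.eps A).Finite ∧
    ∀ B, G.GZero B → B ⊂ A → B.Finite

/-- Condition (RFUM2): the range of each edge is a finite union of sets each of which is
a minimal infinite emitter, a minimal sink, or a singleton consisting of a sink or a
regular vertex. -/
def RFUM2 (G : Ultragraph V E) : Prop :=
  ∀ e : E, ∃ S : Finset (Set V),
    (G.rng e = ⋃ A ∈ S, A) ∧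
    ∀ A ∈ S, G.MinInfEmitter A ∨ G.MinSink A ∨
      ∃ v : V, A = {v} ∧
        (v ∈ G.sinks ∨ ((G.eps {v}).Finite ∧ (G.eps {v}).Nonempty))

end Ultragraph

/-- A filter in a family `𝒜` of sets: a nonempty subset of `𝒜` not containing `∅`,
closed under intersections and upward closed in `𝒜`. -/
def IsFilterIn {V : Type*} (𝒜 ξ : Set (Set V)) : Prop :=
  ξ.Nonempty ∧ ξ ⊆ 𝒜 ∧ ∅ ∉ ξ ∧
    (∀ A ∈ ξ, ∀ B ∈ ξ, A ∩ B ∈ ξ) ∧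
    (∀ A ∈ ξ, ∀ B ∈ 𝒜, A ⊆ B → B ∈ ξ)

/-- An ultrafilter in a family `𝒜` of sets: a maximal filter. -/
def IsUltrafilterIn {V : Type*} (𝒜 ξ : Set (Set V)) : Prop :=
  IsFilterIn 𝒜 ξ ∧ ∀ η, IsFilterIn 𝒜 η → ξ ⊆ η → η = ξ

/-- The prefix `α₁⋯α_n` of an infinite path `α` (0-indexed: `α i` is the `(i+1)`-st edge). -/
def listPre {E : Type*} (α : ℕ → E) (n : ℕ) : List E := (List.range n).map α

section Aux

open Set

variable {V : Type*} {E : Type*} (G : Ultragraph V E)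

/-- A minimal set: a minimal sink or a minimal infinite emitter. -/
def Ultragraph.IsMinimal (B : Set V) : Prop := G.MinSink B ∨ G.MinInfEmitter B

lemma Ultragraph.IsMinimal.gzero {B : Set V} {G : Ultragraph V E}
    (h : G.IsMinimal B) : G.GZero B := by
  rcases h with h | h
  · exact h.1
  · exact h.1

lemma Ultragraph.gzero_subset_minimal {B D : Set V} (hB : G.IsMinimal B)
    (hD : G.GZero D) (hsub : D ⊆ B) : D = B ∨ D.Finite := by
  rcases hsub.ssubset_or_eq with h | h
  · right
    rcases hB with ⟨_, _, _, hmin⟩ | ⟨_, _, h3, h4⟩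
    · exact hmin D hD h
    · have h5 := h3 D hD h
      rw [Set.not_infinite] at h5
      have h6 := h4 D hD h
      by_contra hfin
      exact h6 ⟨h5, hfin⟩
  · exact Or.inl h

lemma Ultragraph.minimal_dichotomy {B : Set V} (hB : G.IsMinimal B) :
    ∀ {C : Set V}, G.AccFam C → (B ∩ C).Finite ∨ (B \ C).Finite := by
  intro C hC
  induction hC with
  | @base A hA =>
    rcases G.gzero_subset_minimal hB (Ultragraph.GZero.inter hB.gzero hA)
        Set.inter_subset_left with h | h
    · right
      have hBA : B ⊆ A := by
        intro x hx
        have : x ∈ B ∩ A := h.symm ▸ hx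
        exact this.2
      rw [Set.diff_eq_empty.2 hBA]
      exact Set.finite_empty
    · exact Or.inl h
  | @union C₁ C₂ h1 h2 ih1 ih2 =>
    rcases ih1 with h | h
    · rcases ih2 with h' | h'
      · left
        rw [Set.inter_union_distrib_left]
        exact h.union h'
      · right
        exact h'.subset fun x hx => ⟨hx.1, fun hc => hx.2 (Or.inr hc)⟩
    · right
      exact h.subset fun x hx => ⟨hx.1, fun hc => hx.2 (Or.inl hc)⟩
  | @inter C₁ C₂ h1 h2 ih1 ih2 =>
    rcases ih1 with h | h
    · left; exact h.subset fun x hx => ⟨hx.1, hx.2.1⟩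
    · rcases ih2 with h' | h'
      · left; exact h'.subset fun x hx => ⟨hx.1, hx.2.2⟩
      · right
        refine (h.union h').subset fun x hx => ?_
        by_cases h1' : x ∈ C₁
        · exact Or.inr ⟨hx.1, fun hc => hx.2 ⟨h1', hc⟩⟩
        · exact Or.inl ⟨hx.1, h1'⟩
  | @diff C₁ C₂ h1 h2 ih1 ih2 =>
    rcases ih1 with h | h
    · left; exact h.subset fun x hx => ⟨hx.1, hx.2.1⟩
    · rcases ih2 with h' | h'
      · right
        refine (h.union h').subset fun x hx => ?_
        by_cases h1' : x ∈ C₁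
        · exact Or.inr ⟨hx.1, Classical.byContradiction fun hc => hx.2 ⟨h1', hc⟩⟩
        · exact Or.inl ⟨hx.1, h1'⟩
      · left; exact h'.subset fun x hx => ⟨hx.1, hx.2.2⟩

lemma Ultragraph.finite_accFam {F : Set V} (h : F.Finite) : G.AccFam F :=
  Set.Finite.induction_on (motive := fun s _ => G.AccFam s) F h (.base .empty) fun _ _ ih => by
    rw [Set.insert_eq]; exact .union (.base (.singleton _)) ih

lemma Ultragraph.decompose (hR : G.RFUM2) : ∀ {C : Set V}, G.AccFam C →
    ∃ T : Set (Set V), T.Finite ∧ (∀ B ∈ T, G.IsMinimal B) ∧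
      ∃ F : Set V, F.Finite ∧ C ⊆ F ∪ ⋃₀ T := by
  intro C hC
  induction hC with
  | @base A hA =>
    clear C
    induction hA with
    | empty => exact ⟨∅, Set.finite_empty, by simp, ∅, Set.finite_empty, by simp⟩
    | singleton v =>
      exact ⟨∅, Set.finite_empty, by simp, {v}, Set.finite_singleton v, by simp⟩
    | range e =>
      obtain ⟨S, hSeq, hS⟩ := hR e
      classical
      refine ⟨{A | A ∈ S ∧ G.IsMinimal A}, S.finite_toSet.subset fun A hA => hA.1,
        fun B hB => hB.2, ⋃₀ {A | A ∈ S ∧ ¬ G.IsMinimal A}, ?_, ?_⟩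
      · refine Set.Finite.sUnion (S.finite_toSet.subset fun A hA => hA.1) ?_
        intro A hA
        rcases hS A hA.1 with h | h | ⟨v, rfl, _⟩
        · exact absurd (Or.inr h) hA.2
        · exact absurd (Or.inl h) hA.2
        · exact Set.finite_singleton v
      · rw [hSeq]
        intro x hx
        simp only [Set.mem_iUnion, exists_prop] at hx
        obtain ⟨A, hA, hxA⟩ := hx
        by_cases hm : G.IsMinimal A
        · exact Or.inr ⟨A, ⟨hA, hm⟩, hxA⟩
        · exact Or.inl ⟨A, ⟨hA, hm⟩, hxA⟩
    | union h1 h2 ih1 ih2 =>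
      obtain ⟨T₁, hT₁, hm₁, F₁, hF₁, hs₁⟩ := ih1
      obtain ⟨T₂, hT₂, hm₂, F₂, hF₂, hs₂⟩ := ih2
      refine ⟨T₁ ∪ T₂, hT₁.union hT₂, fun B hB => hB.elim (hm₁ B) (hm₂ B),
        F₁ ∪ F₂, hF₁.union hF₂, ?_⟩
      rintro x (hx | hx)
      · rcases hs₁ hx with h | ⟨A, hA, hxA⟩
        · exact Or.inl (Or.inl h)
        · exact Or.inr ⟨A, Or.inl hA, hxA⟩
      · rcases hs₂ hx with h | ⟨A, hA, hxA⟩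
        · exact Or.inl (Or.inr h)
        · exact Or.inr ⟨A, Or.inr hA, hxA⟩
    | inter h1 h2 ih1 ih2 =>
      obtain ⟨T₁, hT₁, hm₁, F₁, hF₁, hs₁⟩ := ih1
      exact ⟨T₁, hT₁, hm₁, F₁, hF₁, fun x hx => hs₁ hx.1⟩
  | union h1 h2 ih1 ih2 =>
    obtain ⟨T₁, hT₁, hm₁, F₁, hF₁, hs₁⟩ := ih1
    obtain ⟨T₂, hT₂, hm₂, F₂, hF₂, hs₂⟩ := ih2
    refine ⟨T₁ ∪ T₂, hT₁.union hT₂, fun B hB => hB.elim (hm₁ B) (hm₂ B),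
      F₁ ∪ F₂, hF₁.union hF₂, ?_⟩
    rintro x (hx | hx)
    · rcases hs₁ hx with h | ⟨A, hA, hxA⟩
      · exact Or.inl (Or.inl h)
      · exact Or.inr ⟨A, Or.inl hA, hxA⟩
    · rcases hs₂ hx with h | ⟨A, hA, hxA⟩
      · exact Or.inl (Or.inr h)
      · exact Or.inr ⟨A, Or.inr hA, hxA⟩
  | inter h1 h2 ih1 ih2 =>
    obtain ⟨T₁, hT₁, hm₁, F₁, hF₁, hs₁⟩ := ih1
    exact ⟨T₁, hT₁, hm₁, F₁, hF₁, fun x hx => hs₁ hx.1⟩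
  | diff h1 h2 ih1 ih2 =>
    obtain ⟨T₁, hT₁, hm₁, F₁, hF₁, hs₁⟩ := ih1
    exact ⟨T₁, hT₁, hm₁, F₁, hF₁, fun x hx => hs₁ hx.1⟩

end Aux
section Aux2

variable {V : Type*} {E : Type*} (G : Ultragraph V E) (α : List E)

lemma Ultragraph.bAt_inter {A B : Set V} (hA : A ∈ G.bAt α) (hB : B ∈ G.bAt α) :
    A ∩ B ∈ G.bAt α :=
  ⟨.inter hA.1 hB.1, fun _ hx => hA.2 hx.1⟩

lemma Ultragraph.bAt_diff {A B : Set V} (hA : A ∈ G.bAt α) (hB : G.AccFam B) :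
    A \ B ∈ G.bAt α :=
  ⟨.diff hA.1 hB, fun _ hx => hA.2 hx.1⟩

open Classical in
/-- The candidate bijection. -/
noncomputable def Ultragraph.theta (D : Set V) : Set (Set V) :=
  if D.Infinite then {C | C ∈ G.bAt α ∧ ∃ A ∈ G.bAt α, A.Finite ∧ D \ A ⊆ C}
  else {C | C ∈ G.bAt α ∧ D ⊆ C}

lemma Ultragraph.theta_of_infinite {D : Set V} (h : D.Infinite) :
    G.theta α D = {C | C ∈ G.bAt α ∧ ∃ A ∈ G.bAt α, A.Finite ∧ D \ A ⊆ C} := by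
  rw [Ultragraph.theta, if_pos h]

lemma Ultragraph.theta_of_finite {D : Set V} (h : D.Finite) :
    G.theta α D = {C | C ∈ G.bAt α ∧ D ⊆ C} := by
  rw [Ultragraph.theta, if_neg h.not_infinite]

/-- The principal filter at `v` is an ultrafilter in `ℬ(α)`. -/
lemma Ultragraph.principal_ultra {v : V} (hv : v ∈ G.pathRange α) :
    IsUltrafilterIn (G.bAt α) {C | C ∈ G.bAt α ∧ v ∈ C} := by
  have hsv : ({v} : Set V) ∈ G.bAt α :=
    ⟨.base (.singleton v), Set.singleton_subset_iff.2 hv⟩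
  constructor
  · refine ⟨⟨{v}, hsv, rfl⟩, fun C hC => hC.1, fun h => h.2, ?_, ?_⟩
    · exact fun A hA B hB => ⟨G.bAt_inter α hA.1 hB.1, hA.2, hB.2⟩
    · exact fun A hA B hB hAB => ⟨hB, hAB hA.2⟩
  · intro η hη hsub
    apply Set.eq_of_subset_of_subset _ hsub
    intro C hC
    have h1 : C ∩ {v} ∈ η := hη.2.2.2.1 C hC _ (hsub ⟨hsv, rfl⟩)
    have h2 : v ∈ C := by
      by_contra hvc
      have : C ∩ {v} = ∅ := by
        ext x; simp only [Set.mem_inter_iff, Set.mem_singleton_iff, Set.mem_empty_iff_false,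
          iff_false, not_and]
        rintro hx rfl; exact hvc hx
      exact hη.2.2.1 (this ▸ h1)
    exact ⟨hη.2.1 hC, h2⟩

/-- The cofinite-style filter at an infinite minimal `B ⊆ r(α)` is an ultrafilter. -/
lemma Ultragraph.cofinite_ultra {B : Set V} (hB : G.IsMinimal B)
    (hsub : B ⊆ G.pathRange α) (hinf : B.Infinite) :
    IsUltrafilterIn (G.bAt α)
      {C | C ∈ G.bAt α ∧ ∃ A ∈ G.bAt α, A.Finite ∧ B \ A ⊆ C} := by
  have hBmem : B ∈ G.bAt α := ⟨.base hB.gzero, hsub⟩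
  have hEmpty : (∅ : Set V) ∈ G.bAt α := ⟨.base .empty, Set.empty_subset _⟩
  have hBin : B ∈ {C | C ∈ G.bAt α ∧ ∃ A ∈ G.bAt α, A.Finite ∧ B \ A ⊆ C} :=
    ⟨hBmem, ∅, hEmpty, Set.finite_empty, by simp⟩
  constructor
  · refine ⟨⟨B, hBin⟩, fun C hC => hC.1, ?_, ?_, ?_⟩
    · rintro ⟨-, A, -, hAfin, hBA⟩
      rw [Set.diff_subset_iff, Set.union_empty] at hBA
      exact hinf (hAfin.subset hBA)
    · rintro C₁ ⟨h₁, A₁, hA₁, hA₁f, hs₁⟩ C₂ ⟨h₂, A₂, hA₂, hA₂f, hs₂⟩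
      refine ⟨G.bAt_inter α h₁ h₂, A₁ ∪ A₂,
        ⟨.union hA₁.1 hA₂.1, Set.union_subset hA₁.2 hA₂.2⟩, hA₁f.union hA₂f, ?_⟩
      intro x hx
      exact ⟨hs₁ ⟨hx.1, fun h => hx.2 (Or.inl h)⟩, hs₂ ⟨hx.1, fun h => hx.2 (Or.inr h)⟩⟩
    · rintro C₁ ⟨h₁, A₁, hA₁, hA₁f, hs₁⟩ C₂ h₂ hsub'
      exact ⟨h₂, A₁, hA₁, hA₁f, fun x hx => hsub' (hs₁ hx)⟩
  · intro η hη hsubη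
    apply Set.eq_of_subset_of_subset _ hsubη
    intro C hC
    have hCA : C ∈ G.bAt α := hη.2.1 hC
    rcases G.minimal_dichotomy hB hCA.1 with h | h
    · -- B ∩ C finite: then B \ C ∈ ξ ⊆ η and (B\C) ∩ C = ∅ ∈ η, contradiction
      exfalso
      have hBC : B \ C ∈ G.bAt α := ⟨.diff (.base hB.gzero) hCA.1, fun x hx => hsub hx.1⟩
      have hBCmem : B \ C ∈ η := by
        refine hsubη ⟨hBC, B ∩ C, G.bAt_inter α hBmem hCA, h, ?_⟩
        intro x hx
        exact ⟨hx.1, fun hc => hx.2 ⟨hx.1, hc⟩⟩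
      have : (B \ C) ∩ C ∈ η := hη.2.2.2.1 _ hBCmem _ hC
      have h0 : (B \ C) ∩ C = ∅ := by
        ext x; simp only [Set.mem_inter_iff, Set.mem_diff, Set.mem_empty_iff_false, iff_false]
        rintro ⟨⟨-, h1⟩, h2⟩; exact h1 h2
      exact hη.2.2.1 (h0 ▸ this)
    · refine ⟨hCA, B \ C, ⟨.diff (.base hB.gzero) hCA.1, fun x hx => hsub hx.1⟩, h, ?_⟩
      intro x hx
      exact Classical.byContradiction fun hc => hx.2 ⟨hx.1, hc⟩

/-- If `D ∈ ℬ(α)` meets every member of an ultrafilter `ξ`, then `D ∈ ξ`. -/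
lemma Ultragraph.mem_of_meets {ξ : Set (Set V)} (hξ : IsUltrafilterIn (G.bAt α) ξ)
    {D : Set V} (hD : D ∈ G.bAt α) (hall : ∀ X ∈ ξ, (X ∩ D).Nonempty) : D ∈ ξ := by
  set η : Set (Set V) := {Y | Y ∈ G.bAt α ∧ ∃ X ∈ ξ, X ∩ D ⊆ Y} with hη
  obtain ⟨X₀, hX₀⟩ := hξ.1.1
  have hξη : ξ ⊆ η := fun X hX => ⟨hξ.1.2.1 hX, X, hX, Set.inter_subset_left⟩
  have hfil : IsFilterIn (G.bAt α) η := by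
    refine ⟨⟨X₀, hξη hX₀⟩, fun Y hY => hY.1, ?_, ?_, ?_⟩
    · rintro ⟨-, X, hX, hXD⟩
      obtain ⟨x, hx⟩ := hall X hX
      exact hXD hx
    · rintro Y₁ ⟨h₁, X₁, hX₁, hs₁⟩ Y₂ ⟨h₂, X₂, hX₂, hs₂⟩
      refine ⟨G.bAt_inter α h₁ h₂, X₁ ∩ X₂, hξ.1.2.2.2.1 _ hX₁ _ hX₂, ?_⟩
      exact fun x hx => ⟨hs₁ ⟨hx.1.1, hx.2⟩, hs₂ ⟨hx.1.2, hx.2⟩⟩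
    · rintro Y₁ ⟨h₁, X₁, hX₁, hs₁⟩ Y₂ h₂ hsub
      exact ⟨h₂, X₁, hX₁, fun x hx => hsub (hs₁ hx)⟩
  have := hξ.2 η hfil hξη
  rw [← this]
  exact ⟨hD, X₀, hX₀, Set.inter_subset_right⟩

/-- Ultrafilters are prime. -/
lemma Ultragraph.prime {ξ : Set (Set V)} (hξ : IsUltrafilterIn (G.bAt α) ξ)
    {C C₁ C₂ : Set V} (hC : C ∈ ξ) (h1 : C₁ ∈ G.bAt α) (h2 : C₂ ∈ G.bAt α)
    (hsub : C ⊆ C₁ ∪ C₂) : C ∩ C₁ ∈ ξ ∨ C ∩ C₂ ∈ ξ := by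
  have hCA : C ∈ G.bAt α := hξ.1.2.1 hC
  by_contra hcon
  push_neg at hcon
  have e1 : ∃ X ∈ ξ, X ∩ (C ∩ C₁) = ∅ := by
    by_contra he
    push_neg at he
    exact hcon.1 (G.mem_of_meets α hξ (G.bAt_inter α hCA h1)
      fun X hX => he X hX)
  have e2 : ∃ X ∈ ξ, X ∩ (C ∩ C₂) = ∅ := by
    by_contra he
    push_neg at he
    exact hcon.2 (G.mem_of_meets α hξ (G.bAt_inter α hCA h2)
      fun X hX => he X hX)
  obtain ⟨X₁, hX₁, hXe₁⟩ := e1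
  obtain ⟨X₂, hX₂, hXe₂⟩ := e2
  have hmem : X₁ ∩ X₂ ∩ C ∈ ξ := hξ.1.2.2.2.1 _ (hξ.1.2.2.2.1 _ hX₁ _ hX₂) _ hC
  have : X₁ ∩ X₂ ∩ C = ∅ := by
    ext x
    simp only [Set.mem_inter_iff, Set.mem_empty_iff_false, iff_false, not_and]
    rintro ⟨hx1, hx2⟩ hxC
    rcases hsub hxC with h | h
    · exact absurd hXe₁ (Set.nonempty_iff_ne_empty.1 ⟨x, hx1, hxC, h⟩)
    · exact absurd hXe₂ (Set.nonempty_iff_ne_empty.1 ⟨x, hx2, hxC, h⟩)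
  exact hξ.1.2.2.1 (this ▸ hmem)

/-- If an ultrafilter contains a finite set, it contains a singleton. -/
lemma Ultragraph.singleton_mem {ξ : Set (Set V)} (hξ : IsUltrafilterIn (G.bAt α) ξ) :
    ∀ n (X : Set V), X ∈ ξ → X.Finite → X.ncard ≤ n → ∃ v, {v} ∈ ξ := by
  intro n
  induction n with
  | zero =>
    intro X hX hfin hcard
    rw [Nat.le_zero, Set.ncard_eq_zero hfin] at hcard
    exact absurd (hcard ▸ hX) hξ.1.2.2.1
  | succ n ih =>
    intro X hX hfin hcard
    have hXA : X ∈ G.bAt α := hξ.1.2.1 hX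
    obtain ⟨v, hv⟩ : X.Nonempty := by
      rw [Set.nonempty_iff_ne_empty]
      rintro rfl
      exact hξ.1.2.2.1 hX
    have h1 : ({v} : Set V) ∈ G.bAt α :=
      ⟨.base (.singleton v), Set.singleton_subset_iff.2 (hXA.2 hv)⟩
    have h2 : X \ {v} ∈ G.bAt α := G.bAt_diff α hXA (.base (.singleton v))
    rcases G.prime α hξ hX h1 h2 (fun x hx => by
        by_cases hxv : x = v
        · exact Or.inl (hxv ▸ rfl)
        · exact Or.inr ⟨hx, hxv⟩) with h | h
    · refine ⟨v, ?_⟩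
      have : X ∩ {v} = {v} := by
        ext x; simp only [Set.mem_inter_iff, Set.mem_singleton_iff, and_iff_right_iff_imp]
        rintro rfl; exact hv
      exact this ▸ h
    · have heq : X ∩ (X \ {v}) = X \ {v} := by
        ext x; simp only [Set.mem_inter_iff, Set.mem_diff, and_iff_right_iff_imp]
        exact fun hx => hx.1
      have hlt := Set.ncard_diff_singleton_lt_of_mem hv hfin
      exact ih (X \ {v}) (heq ▸ h) hfin.diff (by omega)

/-- From a cover by finitely many `𝒢⁰`-sets plus a finite set, extract a member. -/
lemma Ultragraph.cover_step {ξ : Set (Set V)} (hξ : IsUltrafilterIn (G.bAt α) ξ)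
    (hnofin : ∀ X ∈ ξ, ¬ X.Finite) {F : Set V} (hF : F.Finite) :
    ∀ n (T : Set (Set V)), T.Finite → T.ncard ≤ n → (∀ B ∈ T, G.GZero B) →
      ∀ C ∈ ξ, C ⊆ F ∪ ⋃₀ T → ∃ B ∈ T, C ∩ B ∈ ξ := by
  intro n
  induction n with
  | zero =>
    intro T hT hcard hgz C hC hsub
    rw [Nat.le_zero, Set.ncard_eq_zero hT] at hcard
    subst hcard
    refine absurd (hF.subset fun x hx => ?_) (hnofin C hC)
    rcases hsub hx with h | ⟨A, hA, -⟩
    · exact h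
    · exact absurd hA (Set.notMem_empty A)
  | succ n ih =>
    intro T hT hcard hgz C hC hsub
    rcases Set.eq_empty_or_nonempty T with rfl | ⟨B₀, hB₀⟩
    · refine absurd (hF.subset fun x hx => ?_) (hnofin C hC)
      rcases hsub hx with h | ⟨A, hA, -⟩
      · exact h
      · exact absurd hA (Set.notMem_empty A)
    have hCA : C ∈ G.bAt α := hξ.1.2.1 hC
    have h1 : C ∩ B₀ ∈ G.bAt α := ⟨.inter hCA.1 (.base (hgz B₀ hB₀)), fun x hx => hCA.2 hx.1⟩
    have h2 : C \ B₀ ∈ G.bAt α := G.bAt_diff α hCA (.base (hgz B₀ hB₀))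
    rcases G.prime α hξ hC h1 h2 (fun x hx => by
        by_cases hxB : x ∈ B₀
        · exact Or.inl ⟨hx, hxB⟩
        · exact Or.inr ⟨hx, hxB⟩) with h | h
    · have heq : C ∩ (C ∩ B₀) = C ∩ B₀ := by
        ext x; simp only [Set.mem_inter_iff, and_iff_right_iff_imp]; exact fun hx => hx.1
      exact ⟨B₀, hB₀, heq ▸ h⟩
    · have heq : C ∩ (C \ B₀) = C \ B₀ := by
        ext x; simp only [Set.mem_inter_iff, Set.mem_diff, and_iff_right_iff_imp]
        exact fun hx => hx.1
      have hmem : C \ B₀ ∈ ξ := heq ▸ h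
      have hsub' : C \ B₀ ⊆ F ∪ ⋃₀ (T \ {B₀}) := by
        rintro x ⟨hxC, hxB⟩
        rcases hsub hxC with hf | ⟨A, hA, hxA⟩
        · exact Or.inl hf
        · refine Or.inr ⟨A, ⟨hA, fun hAB => hxB (hAB ▸ hxA)⟩, hxA⟩
      have hlt := Set.ncard_diff_singleton_lt_of_mem hB₀ hT
      obtain ⟨B, hB, hmem'⟩ := ih (T \ {B₀}) hT.diff (by omega)
        (fun B hB => hgz B hB.1) (C \ B₀) hmem hsub'
      refine ⟨B, hB.1, ?_⟩
      have hCB : C ∩ B ∈ G.bAt α :=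
        ⟨.inter hCA.1 (.base (hgz B hB.1)), fun x hx => hCA.2 hx.1⟩
      exact hξ.1.2.2.2.2 _ hmem' _ hCB fun x hx => ⟨hx.1.1, hx.2⟩
  end Aux2
/-- Suppose `𝒢` satisfies Condition (RFUM2) and `α` is a finite
(possibly empty) path. The map sending `{v}` (for `v ∈ r(α)`) to the principal
ultrafilter `{C ∈ ℬ(α) : v ∈ C}` and sending an infinite `B ∈ A_s ∪ A_∞` with
`B ⊆ r(α)` to `{C ∈ ℬ(α) : ∃ finite A ∈ ℬ(α), B ∖ A ⊆ C}` is a bijection from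
`{{v} : v ∈ r(α)} ∪ {B ∈ A_s ∪ A_∞ : B ⊆ r(α), B infinite}` onto the set of all
ultrafilters in `ℬ(α)`. -/
theorem rfum2_ultrafilter_bijection
    {V E : Type*} [Countable V] [Countable E] (G : Ultragraph V E)
    (hR : G.RFUM2) (α : List E) (hα : G.IsPath α) :
    ∃ Θ : Set V → Set (Set V),
      (∀ v ∈ G.pathRange α, Θ {v} = {C ∈ G.bAt α | v ∈ C}) ∧
      (∀ B : Set V, (G.MinSink B ∨ G.MinInfEmitter B) → B ⊆ G.pathRange α →
        B.Infinite → Θ B = {C ∈ G.bAt α | ∃ A ∈ G.bAt α, A.Finite ∧ B \ A ⊆ C}) ∧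
      Set.BijOn Θ
        ({D : Set V | ∃ v ∈ G.pathRange α, D = {v}} ∪
          {B : Set V | (G.MinSink B ∨ G.MinInfEmitter B) ∧
            B ⊆ G.pathRange α ∧ B.Infinite})
        {ξ : Set (Set V) | IsUltrafilterIn (G.bAt α) ξ} := by
  classical
  have hset : ∀ v : V, {C | C ∈ G.bAt α ∧ ({v} : Set V) ⊆ C} =
      {C | C ∈ G.bAt α ∧ v ∈ C} := by
    intro v; ext C; simp [Set.singleton_subset_iff]
  -- the value of `theta` at infinite minimal sets, as members
  have hselfmem : ∀ B : Set V, G.IsMinimal B → B ⊆ G.pathRange α →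
      B ∈ {C | C ∈ G.bAt α ∧ ∃ A ∈ G.bAt α, A.Finite ∧ B \ A ⊆ C} := by
    intro B hm hsub
    exact ⟨⟨.base hm.gzero, hsub⟩, ∅, ⟨.base .empty, Set.empty_subset _⟩,
      Set.finite_empty, by simp⟩
  refine ⟨G.theta α, ?_, ?_, ?_, ?_, ?_⟩
  · intro v hv
    rw [G.theta_of_finite α (Set.finite_singleton v), hset v]
  · intro B hB hsub hinf
    rw [G.theta_of_infinite α hinf]
  · -- MapsTo
    rintro D (⟨v, hv, rfl⟩ | ⟨hmin, hsub, hinf⟩)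
    · rw [Set.mem_setOf_eq, G.theta_of_finite α (Set.finite_singleton v), hset v]
      exact G.principal_ultra α hv
    · rw [Set.mem_setOf_eq, G.theta_of_infinite α hinf]
      exact G.cofinite_ultra α hmin hsub hinf
  · -- InjOn
    rintro D₁ (⟨v, hv, rfl⟩ | ⟨hm₁, hsub₁, hinf₁⟩) D₂ (⟨w, hw, rfl⟩ | ⟨hm₂, hsub₂, hinf₂⟩) heq
    · rw [G.theta_of_finite α (Set.finite_singleton v),
        G.theta_of_finite α (Set.finite_singleton w)] at heq
      have hv1 : ({v} : Set V) ∈ {C | C ∈ G.bAt α ∧ ({v} : Set V) ⊆ C} :=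
        ⟨⟨.base (.singleton v), Set.singleton_subset_iff.2 hv⟩, subset_rfl⟩
      rw [heq] at hv1
      have : w = v := hv1.2 rfl
      rw [this]
    · exfalso
      rw [G.theta_of_finite α (Set.finite_singleton v),
        G.theta_of_infinite α hinf₂] at heq
      have hv1 : ({v} : Set V) ∈ {C | C ∈ G.bAt α ∧ ({v} : Set V) ⊆ C} :=
        ⟨⟨.base (.singleton v), Set.singleton_subset_iff.2 hv⟩, subset_rfl⟩
      rw [heq] at hv1
      obtain ⟨-, A, hA, hAfin, hBA⟩ := hv1
      refine hinf₂ ((hAfin.union (Set.finite_singleton v)).subset fun x hx => ?_)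
      by_cases hxA : x ∈ A
      · exact Or.inl hxA
      · exact Or.inr (hBA ⟨hx, hxA⟩)
    · exfalso
      rw [G.theta_of_finite α (Set.finite_singleton w),
        G.theta_of_infinite α hinf₁] at heq
      have hv1 : ({w} : Set V) ∈ {C | C ∈ G.bAt α ∧ ({w} : Set V) ⊆ C} :=
        ⟨⟨.base (.singleton w), Set.singleton_subset_iff.2 hw⟩, subset_rfl⟩
      rw [← heq] at hv1
      obtain ⟨-, A, hA, hAfin, hBA⟩ := hv1
      refine hinf₁ ((hAfin.union (Set.finite_singleton w)).subset fun x hx => ?_)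
      by_cases hxA : x ∈ A
      · exact Or.inl hxA
      · exact Or.inr (hBA ⟨hx, hxA⟩)
    · rw [G.theta_of_infinite α hinf₁, G.theta_of_infinite α hinf₂] at heq
      have key : ∀ B₁ B₂ : Set V, G.IsMinimal B₁ → B₁ ⊆ G.pathRange α →
          G.IsMinimal B₂ → B₂ ⊆ G.pathRange α → B₂.Infinite →
          {C | C ∈ G.bAt α ∧ ∃ A ∈ G.bAt α, A.Finite ∧ B₁ \ A ⊆ C} =
            {C | C ∈ G.bAt α ∧ ∃ A ∈ G.bAt α, A.Finite ∧ B₂ \ A ⊆ C} →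
          B₂ ⊆ B₁ := by
        intro B₁ B₂ hmm₁ hsubb₁ hmm₂ hsubb₂ hinfb₂ heq'
        have h1 := hselfmem B₁ hmm₁ hsubb₁
        rw [heq'] at h1
        obtain ⟨-, A, hA, hAfin, hBA⟩ := h1
        have hd : (B₂ \ B₁).Finite := hAfin.subset fun x hx =>
          Classical.byContradiction fun hc => hx.2 (hBA ⟨hx.1, hc⟩)
        have hint : (B₂ ∩ B₁).Infinite := by
          have := hinfb₂.diff hd
          refine this.mono fun x hx => ?_
          exact ⟨hx.1, Classical.byContradiction fun hc => hx.2 ⟨hx.1, hc⟩⟩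
        rcases G.gzero_subset_minimal hmm₂ (Ultragraph.GZero.inter hmm₂.gzero hmm₁.gzero)
            Set.inter_subset_left with he | hf
        · intro x hx
          have : x ∈ B₂ ∩ B₁ := he.symm ▸ hx
          exact this.2
        · exact absurd hf hint
      exact Set.Subset.antisymm
        (key D₂ D₁ hm₂ hsub₂ hm₁ hsub₁ hinf₁ heq.symm)
        (key D₁ D₂ hm₁ hsub₁ hm₂ hsub₂ hinf₂ heq)
  · -- SurjOn
    intro ξ hξ
    rw [Set.mem_setOf_eq] at hξ
    by_cases hfin : ∃ X ∈ ξ, X.Finite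
    · obtain ⟨X, hX, hXfin⟩ := hfin
      obtain ⟨v, hv⟩ := G.singleton_mem α hξ X.ncard X hX hXfin le_rfl
      have hvr : v ∈ G.pathRange α := (hξ.1.2.1 hv).2 rfl
      refine ⟨{v}, Or.inl ⟨v, hvr, rfl⟩, ?_⟩
      rw [G.theta_of_finite α (Set.finite_singleton v), hset v]
      refine hξ.2 _ (G.principal_ultra α hvr).1 ?_
      intro C hC
      refine ⟨hξ.1.2.1 hC, ?_⟩
      by_contra hvc
      have h1 : C ∩ {v} ∈ ξ := hξ.1.2.2.2.1 _ hC _ hv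
      have h0 : C ∩ {v} = ∅ := by
        ext x
        simp only [Set.mem_inter_iff, Set.mem_singleton_iff, Set.mem_empty_iff_false,
          iff_false, not_and]
        rintro hx rfl
        exact hvc hx
      exact hξ.1.2.2.1 (h0 ▸ h1)
    · push_neg at hfin
      have hnofin : ∀ X ∈ ξ, ¬ X.Finite := fun X hX => hfin X hX
      obtain ⟨C₀, hC₀⟩ := hξ.1.1
      obtain ⟨T, hTfin, hTmin, F, hFfin, hcov⟩ := G.decompose hR (hξ.1.2.1 hC₀).1
      obtain ⟨B, hBT, hmem⟩ := G.cover_step α hξ hnofin hFfin T.ncard T hTfin le_rfl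
        (fun B hB => (hTmin B hB).gzero) C₀ hC₀ hcov
      have hBmin := hTmin B hBT
      have hC'inf : (C₀ ∩ B).Infinite := hfin _ hmem
      have hBinf : B.Infinite := hC'inf.mono Set.inter_subset_right
      have hBsub : B ⊆ G.pathRange α := by
        cases hlast : α.getLast? with
        | none =>
          rw [Ultragraph.pathRange, hlast]
          exact Set.subset_univ B
        | some e =>
          have hgz : G.GZero (B ∩ G.pathRange α) := by
            rw [Ultragraph.pathRange, hlast]
            exact .inter hBmin.gzero (.range e)
          rcases G.gzero_subset_minimal hBmin hgz Set.inter_subset_left with he | hf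
          · intro x hx
            have : x ∈ B ∩ G.pathRange α := he.symm ▸ hx
            exact this.2
          · exfalso
            refine hC'inf (hf.subset fun x hx => ?_)
            exact ⟨hx.2, (hξ.1.2.1 hC₀).2 hx.1⟩
      refine ⟨B, Or.inr ⟨hBmin, hBsub, hBinf⟩, ?_⟩
      rw [G.theta_of_infinite α hBinf]
      refine hξ.2 _ (G.cofinite_ultra α hBmin hBsub hBinf).1 ?_
      intro C hC
      have hCA := hξ.1.2.1 hC
      rcases G.minimal_dichotomy hBmin hCA.1 with h | h
      · exfalso
        have hmm : (C₀ ∩ B) ∩ C ∈ ξ := hξ.1.2.2.2.1 _ hmem _ hC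
        exact hnofin _ hmm (h.subset fun x hx => ⟨hx.1.2, hx.2⟩)
      · exact ⟨hCA, B \ C, ⟨.diff (.base hBmin.gzero) hCA.1, fun x hx => hBsub hx.1⟩, h,
          fun x hx => Classical.byContradiction fun hc => hx.2 ⟨hx.1, hc⟩⟩
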